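/- arXiv:2401.03054 — 3 statements merged into one kernel-verified Lean document; each statement's English description precedes it below -/
import Mathlib

section
/- If f, g ∈ ℂ(q) are each zero or reduced rational functions with poles only at roots of unity, then the sum over all roots of unity ζ of the residues Res_ζ (σ(f)·g·q⁻¹) equals 0 (the sum is finite, since only finitely many of these residues are nonzero). Thus the subspace of reduced rational functions with poles only at roots of unity is isotropic for the residue pairing ω. -/
/-!
For a proper fraction `a / b` the residues at the roots of `b` add up to `a_{n-1} / lc(b)` with
`n = deg b` (minus the residue at infinity). Induct on `deg b`: at a root `ζ` of multiplicity `m`,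
subtracting `γ / (q - ζ)^m` with `γ` chosen to cancel the top-order pole leaves a proper fraction
whose denominator has degree `n - 1`.

If `f = a / b` is reduced with poles only at roots of unity, then `b(0) ≠ 0`, hence
`σ(f) q⁻¹ = q^{n-1} a(q⁻¹) / (q^n b(q⁻¹))` is a quotient of polynomials whose denominator, the
reversal of `b`, has degree `n` and vanishes exactly at the inverses of the roots of `b`. So
`σ(f) g q⁻¹ = A / B` with all roots of `B` roots of unity and `deg A ≤ deg B - 2`: the sum over
the roots of unity is the sum of all residues, which is `0`.
-/

open Polynomial

noncomputable section

/-- A complex number is a root of unity if some positive power of it equals `1`. -/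
def IsRootOfUnity (ζ : ℂ) : Prop := ∃ n : ℕ, 0 < n ∧ ζ ^ n = 1

/-- A rational function `f ∈ ℂ(q)` is zero or a reduced rational function with poles only at
roots of unity. -/
def ReducedPolesOnlyAtRootsOfUnity (f : RatFunc ℂ) : Prop :=
  ∃ a b : ℂ[X], a.degree < b.degree ∧ (∀ ζ : ℂ, b.IsRoot ζ → IsRootOfUnity ζ) ∧
    f = algebraMap ℂ[X] (RatFunc ℂ) a / algebraMap ℂ[X] (RatFunc ℂ) b

/-- The residue of a rational function `f ∈ ℂ(q)` at a point `ζ`. -/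
def residue (ζ : ℂ) (f : RatFunc ℂ) : ℂ :=
  (open scoped RatFunc in algebraMap (RatFunc ℂ) (LaurentSeries ℂ) (RatFunc.laurent ζ f)).coeff (-1 : ℤ)

/-- The residue pairing `ω(f, g) = Σ_{ζ root of unity} Res_ζ (σ(f) · g · q⁻¹)`. -/
def omegaPair (σ : RatFunc ℂ → RatFunc ℂ) (f g : RatFunc ℂ) : ℂ :=
  ∑ᶠ ζ ∈ {z : ℂ | IsRootOfUnity z}, residue ζ (σ f * g * (RatFunc.X : RatFunc ℂ)⁻¹)

section Field

open scoped LaurentSeries PowerSeries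

variable {F : Type*} [Field F]

theorem RatFunc.coe_algebraMap_polynomial (p : F[X]) :
    ((algebraMap F[X] (RatFunc F) p : RatFunc F) : F⸨X⸩) = HahnSeries.ofPowerSeries ℤ F p :=
  (RatFunc.coe_coe p).symm

theorem RatFunc.coe_div_eq_ofPowerSeries (p q : F[X]) (hq : q.coeff 0 ≠ 0) :
    ((algebraMap F[X] (RatFunc F) p / algebraMap F[X] (RatFunc F) q : RatFunc F) : F⸨X⸩) =
      HahnSeries.ofPowerSeries ℤ F (p * (q : F⟦X⟧)⁻¹) := by
  have hq' : PowerSeries.constantCoeff (q : F⟦X⟧) ≠ 0 := by simpa using hq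
  rw [map_div₀, div_eq_iff, RatFunc.coe_algebraMap_polynomial, RatFunc.coe_algebraMap_polynomial,
    ← map_mul, mul_assoc, PowerSeries.inv_mul_cancel _ hq', mul_one]
  exact (_root_.map_ne_zero _).mpr (RatFunc.algebraMap_ne_zero (by rintro rfl; simp at hq))

theorem RatFunc.coeff_coe_div_of_neg (p q : F[X]) (hq : q.coeff 0 ≠ 0) {n : ℤ} (hn : n < 0) :
    ((algebraMap F[X] (RatFunc F) p / algebraMap F[X] (RatFunc F) q : RatFunc F) :
      F⸨X⸩).coeff n = 0 := by
  rw [RatFunc.coe_div_eq_ofPowerSeries p q hq, PowerSeries.coeff_coe, if_pos hn]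

theorem RatFunc.coe_C_div_X_pow (γ : F) (m : ℕ) :
    ((C γ / X ^ m : RatFunc F) : F⸨X⸩) = HahnSeries.single (-(m : ℤ)) γ := by
  rw [map_div₀, map_pow, RatFunc.coe_X, HahnSeries.single_pow, div_eq_mul_inv,
    HahnSeries.inv_single, ← RatFunc.algebraMap_C, RatFunc.coe_algebraMap_polynomial,
    Polynomial.coe_C, HahnSeries.ofPowerSeries_C, HahnSeries.C_apply, HahnSeries.single_mul_single]
  simp

theorem exists_eq_X_sub_C_pow_succ_mul {b : F[X]} (hb : b ≠ 0) {ζ : F} (hζ : b.IsRoot ζ) :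
    ∃ (k : ℕ) (c : F[X]), b = (X - C ζ) ^ (k + 1) * c ∧ c.eval ζ ≠ 0 := by
  obtain ⟨c, hbc, hc⟩ := b.exists_eq_pow_rootMultiplicity_mul_and_not_dvd hb ζ
  obtain ⟨k, hk⟩ := Nat.exists_eq_add_one_of_ne_zero ((rootMultiplicity_pos hb).mpr hζ).ne'
  exact ⟨k, c, hk ▸ hbc, fun h ↦ hc (dvd_iff_isRoot.mpr h)⟩

theorem div_X_sub_C_pow_succ_mul {ζ γ : F} {a c d : F[X]} (k : ℕ) (hc : c ≠ 0)
    (ha : a = C γ * c + (X - C ζ) * d) :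
    algebraMap F[X] (RatFunc F) a / algebraMap F[X] (RatFunc F) ((X - C ζ) ^ (k + 1) * c) =
      algebraMap F[X] (RatFunc F) (C γ) / algebraMap F[X] (RatFunc F) ((X - C ζ) ^ (k + 1)) +
        algebraMap F[X] (RatFunc F) d / algebraMap F[X] (RatFunc F) ((X - C ζ) ^ k * c) := by
  have hX : algebraMap F[X] (RatFunc F) (X - C ζ) ≠ 0 :=
    RatFunc.algebraMap_ne_zero (X_sub_C_ne_zero ζ)
  have hc' : algebraMap F[X] (RatFunc F) c ≠ 0 := RatFunc.algebraMap_ne_zero hc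
  simp only [ha, map_add, map_mul, map_pow]
  field_simp
  ring

theorem degree_lt_of_eq_C_mul_add_X_sub_C_mul {ζ γ : F} {a c d : F[X]} {k : ℕ} (hc : c ≠ 0)
    (ha : a = C γ * c + (X - C ζ) * d) (h : a.degree < ((X - C ζ) ^ (k + 1) * c).degree) :
    d.degree < ((X - C ζ) ^ k * c).degree := by
  have h' : ((X - C ζ) * d).degree < ((X - C ζ) * ((X - C ζ) ^ k * c)).degree := by
    rw [← mul_assoc, ← pow_succ', show (X - C ζ) * d = a - C γ * c by rw [ha]; ring]
    refine (degree_sub_le _ _).trans_lt (max_lt h (degree_lt_degree ?_))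
    rw [natDegree_mul (pow_ne_zero _ (X_sub_C_ne_zero ζ)) hc]
    exact (natDegree_C_mul_le _ _).trans_lt (by simp)
  rwa [degree_mul, degree_mul, WithBot.add_lt_add_iff_left (by simp)] at h'

theorem coeff_X_sub_C_mul_of_degree_lt (ζ : F) {d : F[X]} {n : ℕ} (hd : d.degree < n) :
    ((X - C ζ) * d).coeff n = d.coeff (n - 1) := by
  rcases n with _ | n
  · simp_all
  · rw [coeff_X_sub_C_mul, coeff_eq_zero_of_degree_lt hd]
    simp

theorem Polynomial.isRoot_reverse_iff {b : F[X]} {ξ : F} (hξ : ξ ≠ 0) :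
    b.reverse.IsRoot ξ ↔ b.IsRoot ξ⁻¹ := by
  let _ : Invertible ξ⁻¹ := invertibleOfNonzero (inv_ne_zero hξ)
  simpa only [IsRoot, eval, invOf_eq_inv, inv_inv] using
    eval₂_reverse_eq_zero_iff (RingHom.id F) ξ⁻¹ b

theorem Polynomial.natDegree_reverse_of_coeff_zero_ne_zero {b : F[X]} (hb : b.coeff 0 ≠ 0) :
    b.reverse.natDegree = b.natDegree := by
  rw [reverse_natDegree, natTrailingDegree_eq_zero.mpr (Or.inr hb), Nat.sub_zero]

theorem RatFunc.map_algebraMap_eq_reflect_div {G : Type*} [FunLike G (RatFunc F) (RatFunc F)]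
    [AlgHomClass G F (RatFunc F) (RatFunc F)] {φ : G} (hφ : φ RatFunc.X = RatFunc.X⁻¹)
    {p : F[X]} {N : ℕ} (hp : p.natDegree ≤ N) :
    φ (algebraMap F[X] (RatFunc F) p) =
      algebraMap F[X] (RatFunc F) (reflect N p) / RatFunc.X ^ N := by
  let _ : Invertible (RatFunc.X⁻¹ : RatFunc F) :=
    invertibleOfNonzero (inv_ne_zero RatFunc.X_ne_zero)
  rw [← RatFunc.aeval_X_left_eq_algebraMap, ← aeval_algHom_apply, hφ, aeval_def,
    ← eval₂_reflect_mul_pow _ _ N p hp, invOf_eq_inv, inv_inv, ← aeval_def,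
    RatFunc.aeval_X_left_eq_algebraMap, inv_pow, div_eq_mul_inv]

theorem RatFunc.map_div_mul_div_mul_inv_X {G : Type*} [FunLike G (RatFunc F) (RatFunc F)]
    [AlgHomClass G F (RatFunc F) (RatFunc F)] {φ : G} (hφ : φ RatFunc.X = RatFunc.X⁻¹)
    {a b : F[X]} (hab : a.natDegree < b.natDegree) (c d : F[X]) :
    φ (algebraMap F[X] (RatFunc F) a / algebraMap F[X] (RatFunc F) b) *
        (algebraMap F[X] (RatFunc F) c / algebraMap F[X] (RatFunc F) d) * RatFunc.X⁻¹ =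
      algebraMap F[X] (RatFunc F) (reflect (b.natDegree - 1) a * c) /
        algebraMap F[X] (RatFunc F) (b.reverse * d) := by
  obtain ⟨n, hn⟩ := Nat.exists_eq_add_one_of_ne_zero (Nat.ne_zero_of_lt hab)
  have hb : algebraMap F[X] (RatFunc F) b.reverse ≠ 0 :=
    RatFunc.algebraMap_ne_zero (reverse_eq_zero.not.mpr (by rintro rfl; simp at hab))
  have hX := RatFunc.X_ne_zero (K := F)
  rw [map_div₀,
    RatFunc.map_algebraMap_eq_reflect_div hφ (by omega : a.natDegree ≤ b.natDegree - 1),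
    RatFunc.map_algebraMap_eq_reflect_div hφ le_rfl, ← reverse, hn, Nat.add_sub_cancel, map_mul,
    map_mul]
  field_simp
  ring

end Field

theorem IsRootOfUnity.ne_zero {ζ : ℂ} (hζ : IsRootOfUnity ζ) : ζ ≠ 0 := by
  rintro rfl
  obtain ⟨n, hn, h⟩ := hζ
  simp [zero_pow hn.ne'] at h

theorem IsRootOfUnity.of_inv {ζ : ℂ} (hζ : IsRootOfUnity ζ⁻¹) : IsRootOfUnity ζ := by
  obtain ⟨n, hn, h⟩ := hζ
  exact ⟨n, hn, by rwa [inv_pow, inv_eq_one] at h⟩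

theorem isRootOfUnity_of_isRoot_reverse {b : ℂ[X]} (hb : ∀ ζ, b.IsRoot ζ → IsRootOfUnity ζ)
    {ξ : ℂ} (hξ : b.reverse.IsRoot ξ) : IsRootOfUnity ξ := by
  have hb0 : b.leadingCoeff ≠ 0 := by
    rintro h
    exact (hb 0 (by simp [leadingCoeff_eq_zero.mp h])).ne_zero rfl
  have hξ0 : ξ ≠ 0 := by
    rintro rfl
    exact hb0 (by rwa [← coeff_zero_reverse, coeff_zero_eq_eval_zero])
  exact (hb _ ((isRoot_reverse_iff hξ0).mp hξ)).of_inv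

theorem residue_add (ζ : ℂ) (f g : RatFunc ℂ) :
    residue ζ (f + g) = residue ζ f + residue ζ g := by
  simp [residue]

theorem residue_zero (ζ : ℂ) : residue ζ 0 = 0 := by
  simp [residue]

theorem residue_div_eq_zero_of_eval_ne_zero {ζ : ℂ} (p : ℂ[X]) {q : ℂ[X]}
    (hq : q.eval ζ ≠ 0) :
    residue ζ (algebraMap ℂ[X] (RatFunc ℂ) p / algebraMap ℂ[X] (RatFunc ℂ) q) = 0 := by
  rw [residue, RatFunc.laurent_div]
  exact RatFunc.coeff_coe_div_of_neg _ _ (by rwa [taylor_coeff_zero]) (by norm_num)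

theorem residue_C_div_X_sub_C_pow (γ ζ : ℂ) (m : ℕ) :
    residue ζ (algebraMap ℂ[X] (RatFunc ℂ) (C γ) /
        algebraMap ℂ[X] (RatFunc ℂ) ((X - C ζ) ^ m)) =
      if m = 1 then γ else 0 := by
  rw [residue, RatFunc.laurent_div, taylor_pow, map_sub, taylor_X, taylor_C, taylor_C,
    add_sub_cancel_right, map_pow, RatFunc.algebraMap_C, RatFunc.algebraMap_X,
    RatFunc.coe_C_div_X_pow, HahnSeries.coeff_single]
  simp [eq_comm]

theorem hasFiniteSupport_residue (f : RatFunc ℂ) :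
    Function.HasFiniteSupport fun ζ ↦ residue ζ f := by
  refine (f.denom.finite_setOfPred_isRoot f.denom_ne_zero).subset fun ζ hζ ↦ ?_
  by_contra h
  rw [← f.num_div_denom] at hζ
  exact hζ (residue_div_eq_zero_of_eval_ne_zero _ h)

def totalResidue (f : RatFunc ℂ) : ℂ := ∑ᶠ ζ, residue ζ f

theorem totalResidue_add (f g : RatFunc ℂ) :
    totalResidue (f + g) = totalResidue f + totalResidue g := by
  simp only [totalResidue, residue_add]
  exact finsum_add_distrib (hasFiniteSupport_residue f) (hasFiniteSupport_residue g)

theorem totalResidue_C_div_X_sub_C_pow (γ ζ : ℂ) (m : ℕ) :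
    totalResidue (algebraMap ℂ[X] (RatFunc ℂ) (C γ) /
        algebraMap ℂ[X] (RatFunc ℂ) ((X - C ζ) ^ m)) =
      if m = 1 then γ else 0 := by
  rw [totalResidue, finsum_eq_single _ ζ, residue_C_div_X_sub_C_pow]
  intro ξ hξ
  exact residue_div_eq_zero_of_eval_ne_zero _ (by simp [sub_ne_zero.mpr hξ])

theorem totalResidue_div {a b : ℂ[X]} (h : a.degree < b.degree) :
    totalResidue (algebraMap ℂ[X] (RatFunc ℂ) a / algebraMap ℂ[X] (RatFunc ℂ) b) =
      a.coeff (b.natDegree - 1) / b.leadingCoeff := by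
  induction hN : b.natDegree using Nat.strong_induction_on generalizing a b with
  | _ N ih =>
  rcases eq_or_ne a 0 with rfl | ha
  · simp [totalResidue, residue_zero]
  obtain ⟨ζ, hζ⟩ := Complex.exists_root ((zero_le_degree_iff.mpr ha).trans_lt h)
  obtain ⟨k, c, rfl, hc⟩ := exists_eq_X_sub_C_pow_succ_mul (ne_zero_of_degree_gt h) hζ
  have hc0 : c ≠ 0 := by rintro rfl; simp at hc
  set γ := a.eval ζ / c.eval ζ
  obtain ⟨d, hd⟩ : X - C ζ ∣ a - C γ * c := dvd_iff_isRoot.mpr (by simp [γ, hc])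
  have had : a = C γ * c + (X - C ζ) * d := by rw [← hd]; ring
  have hdeg := degree_lt_of_eq_C_mul_add_X_sub_C_mul hc0 had h
  have hnat (j : ℕ) : ((X - C ζ) ^ j * c).natDegree = j + c.natDegree := by
    rw [natDegree_mul (pow_ne_zero _ (X_sub_C_ne_zero ζ)) hc0]; simp
  have hlc (j : ℕ) : ((X - C ζ) ^ j * c).leadingCoeff = c.leadingCoeff := by
    simp [leadingCoeff_mul]
  rw [div_X_sub_C_pow_succ_mul k hc0 had, totalResidue_add, totalResidue_C_div_X_sub_C_pow,
    ih _ (by rw [← hN, hnat, hnat]; omega) hdeg rfl, ← hN, hnat, hnat, hlc, hlc, had, coeff_add,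
    coeff_C_mul, add_right_comm, add_tsub_cancel_right,
    coeff_X_sub_C_mul_of_degree_lt ζ (hdeg.trans_le (by rw [← hnat]; exact degree_le_natDegree))]
  rcases k with _ | k
  · have hlc0 : c.leadingCoeff ≠ 0 := leadingCoeff_ne_zero.mpr hc0
    simp only [zero_add, coeff_natDegree, if_pos]
    field_simp
  · rw [coeff_eq_zero_of_natDegree_lt (p := c) (by omega), if_neg (by omega)]
    ring

theorem totalResidue_div_eq_zero {a b : ℂ[X]} (h : a.natDegree + 1 < b.natDegree) :
    totalResidue (algebraMap ℂ[X] (RatFunc ℂ) a / algebraMap ℂ[X] (RatFunc ℂ) b) = 0 := by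
  rw [totalResidue_div (degree_lt_degree (by omega)), coeff_eq_zero_of_natDegree_lt (by omega),
    zero_div]

theorem finsum_mem_residue_div_eq_totalResidue {S : Set ℂ} (a : ℂ[X]) {b : ℂ[X]}
    (hS : ∀ ζ, b.IsRoot ζ → ζ ∈ S) :
    ∑ᶠ ζ ∈ S, residue ζ
        (algebraMap ℂ[X] (RatFunc ℂ) a / algebraMap ℂ[X] (RatFunc ℂ) b) =
      totalResidue (algebraMap ℂ[X] (RatFunc ℂ) a / algebraMap ℂ[X] (RatFunc ℂ) b) := by
  refine (finsum_mem_inter_support_eq' _ S Set.univ fun ζ hζ ↦ iff_of_true ?_ trivial).trans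
    (finsum_mem_univ _)
  by_contra hζS
  exact hζ (residue_div_eq_zero_of_eval_ne_zero a fun h ↦ hζS (hS ζ h))

/-- If `f, g ∈ ℂ(q)` are both zero or reduced rational functions with poles only at roots of
unity, then the sum of the residues of `σ(f)·g·q⁻¹` over all roots of unity vanishes:
the subspace `𝒦₋` is isotropic for the residue pairing `ω`. -/
theorem omega_vanishes_on_reduced (σ : RatFunc ℂ ≃ₐ[ℂ] RatFunc ℂ)
    (hσ : σ RatFunc.X = (RatFunc.X : RatFunc ℂ)⁻¹)
    (f g : RatFunc ℂ) (hf : ReducedPolesOnlyAtRootsOfUnity f)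
    (hg : ReducedPolesOnlyAtRootsOfUnity g) :
    omegaPair σ f g = 0 := by
  obtain ⟨af, bf, hf_deg, hf_roots, rfl⟩ := hf
  obtain ⟨ag, bg, hg_deg, hg_roots, rfl⟩ := hg
  rcases eq_or_ne af 0 with rfl | haf
  · simp [omegaPair, residue_zero]
  rcases eq_or_ne ag 0 with rfl | hag
  · simp [omegaPair, residue_zero]
  have hf_nat := natDegree_lt_natDegree haf hf_deg
  have hg_nat := natDegree_lt_natDegree hag hg_deg
  have hbf : bf.coeff 0 ≠ 0 := by
    rw [coeff_zero_eq_eval_zero]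
    exact fun h ↦ (hf_roots 0 h).ne_zero rfl
  have hroots (ζ : ℂ) (hζ : (bf.reverse * bg).IsRoot ζ) : IsRootOfUnity ζ := by
    rw [IsRoot, eval_mul, mul_eq_zero] at hζ
    exact hζ.elim (isRootOfUnity_of_isRoot_reverse hf_roots) (hg_roots ζ)
  have hdeg : (reflect (bf.natDegree - 1) af * ag).natDegree + 1 <
      (bf.reverse * bg).natDegree := by
    rw [natDegree_mul (reverse_eq_zero.not.mpr (by rintro rfl; simp at hbf))
      (by rintro rfl; simp at hg_nat), natDegree_reverse_of_coeff_zero_ne_zero hbf]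
    have := natDegree_reflect_le (N := bf.natDegree - 1) (p := af)
    have := natDegree_mul_le (p := reflect (bf.natDegree - 1) af) (q := ag)
    omega
  rw [omegaPair, RatFunc.map_div_mul_div_mul_inv_X hσ hf_nat,
    finsum_mem_residue_div_eq_totalResidue (S := {z | IsRootOfUnity z}) _ hroots,
    totalResidue_div_eq_zero hdeg]
end
end

section
/- Let V be a finite-dimensional vector space over a field K, let l ≥ 1 be an integer, and let A, h : V → V be linear endomorphisms. Let T : V^{⊗l} → V^{⊗l} be the unique linear endomorphism of the l-th tensor power satisfying T(v₁ ⊗ v₂ ⊗ ⋯ ⊗ v_l) = (A∘h)(v_l) ⊗ h(v₁) ⊗ ⋯ ⊗ h(v_{l−1}) for all v₁, …, v_l ∈ V. Then trace(T) = trace(A ∘ h^l). -/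
/-!
In the product basis `b_f = b (f 0) ⊗ ⋯ ⊗ b (f (l-1))` of `V^{⊗l}`, the diagonal entry of `T` at
`f` is `C (f 0) (f (l-1)) * H (f (l-1)) (f (l-2)) * ⋯ * H (f 1) (f 0)`, where `C` and `H` are the
matrices of `A ∘ h` and `h`: a weighted closed path of length `l`. Summing over all closed paths
gives the trace of `C * H ^ (l-1)`, the matrix of `A ∘ h ^ l`.
-/

open scoped TensorProduct

namespace Matrix

variable {ι R : Type*} [Fintype ι] [DecidableEq ι] [CommSemiring R]

theorem sum_prod_path_eq_trace_pow_mul (H G : Matrix ι ι R) (n : ℕ) :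
    ∑ f : Fin (n + 1) → ι, G (f 0) (f (Fin.last n)) * ∏ k : Fin n, H (f k.succ) (f k.castSucc) =
      (H ^ n * G).trace := by
  induction n generalizing G with
  | zero =>
    simpa [trace] using ((Equiv.funUnique (Fin 1) ι).symm.sum_comp fun f => G (f 0) (f 0)).symm
  | succ n ih =>
    -- Splitting off the first vertex `f 0` absorbs one factor of `H` into `G`.
    rw [pow_succ, Matrix.mul_assoc, ← ih, ← (Fin.consEquiv fun _ => ι).sum_comp,
      Fintype.sum_prod_type, Finset.sum_comm]
    refine Finset.sum_congr rfl fun t _ => ?_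
    simp only [Fin.consEquiv, Equiv.coe_fn_mk, Fin.cons_zero, Fin.cons_last, Fin.cons_succ,
      Fin.prod_univ_succ, Fin.castSucc_zero, Fin.castSucc_succ, mul_apply, Finset.sum_mul]
    exact Finset.sum_congr rfl fun _ _ => by ring

end Matrix

theorem Fin.neg_one_eq_last (n : ℕ) : (-1 : Fin (n + 1)) = Fin.last n := by
  ext
  simp [Fin.coe_neg_one]

theorem Fin.succ_sub_one {n : ℕ} (k : Fin n) : (k.succ : Fin (n + 1)) - 1 = k.castSucc := by
  ext
  simp [Fin.coe_sub_one, Fin.succ_ne_zero]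

/-- Let `V` be a finite-dimensional vector space over a field `K`, `l ≥ 1`, and `A, h`
endomorphisms of `V`. If `T` is the endomorphism of the `l`-th tensor power `V^{⊗l}` with
`T(v₁ ⊗ ⋯ ⊗ v_l) = (A∘h)(v_l) ⊗ h(v₁) ⊗ ⋯ ⊗ h(v_{l−1})` (cyclic permutation of factors, with
`h` applied to each factor and `A` applied to the wrapped-around factor), then
`trace T = trace (A ∘ h^l)`. -/
theorem trace_cyclic_tensorPower (K V : Type*) [Field K] [AddCommGroup V] [Module K V]
    [FiniteDimensional K V] (l : ℕ) [NeZero l] (A h : V →ₗ[K] V)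
    (T : (⨂[K]^l V) →ₗ[K] (⨂[K]^l V))
    (hT : ∀ v : Fin l → V,
      T (PiTensorProduct.tprod K v) =
        PiTensorProduct.tprod K (fun i => if i = 0 then A (h (v (i - 1))) else h (v (i - 1)))) :
    LinearMap.trace K (⨂[K]^l V) T = LinearMap.trace K V (A ∘ₗ (h ^ l)) := by
  classical
  obtain ⟨n, rfl⟩ := Nat.exists_eq_add_one_of_ne_zero (NeZero.ne l)
  let b := Module.finBasis K V
  rw [LinearMap.trace_eq_matrix_trace K (Basis.piTensorProduct fun _ => b) T,
    LinearMap.trace_eq_matrix_trace K b, pow_succ', Module.End.mul_eq_comp, ← LinearMap.comp_assoc,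
    LinearMap.toMatrix_comp b b b, ← LinearMap.toMatrix_pow, Matrix.trace_mul_comm,
    ← Matrix.sum_prod_path_eq_trace_pow_mul]
  refine Finset.sum_congr rfl fun f _ => ?_
  simp [LinearMap.toMatrix_apply, hT, Fin.prod_univ_succ, Fin.neg_one_eq_last, Fin.succ_sub_one]
end

section
/- Let a ∈ ℂ[q,λ], let f₀(q) = ∏_{s=1}^{N} (1 − ζ_s q) with each ζ_s a root of unity, and let f₁ ∈ ℂ[λ] with f₁(0) ≠ 0, and assume deg_q a < N. Then a/(f₀·f₁) has a well-defined λ-adic expansion Σ_{i≥0} c_i(q) λ^i in ℂ(q)[[λ]], and every coefficient c_i ∈ ℂ(q) is zero or a reduced rational function with poles only at roots of unity. -/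
open Polynomial

noncomputable section

/-- The polynomial ring `ℂ[q,λ]`, realized as polynomials in `λ` (the outer variable) with
coefficients in `ℂ[q]` (the inner variable). -/
abbrev QL := Polynomial (Polynomial ℂ)

/-- A polynomial in the variable `q` alone, viewed in `ℂ[q,λ]`. -/
noncomputable def ofQ (p : Polynomial ℂ) : QL := Polynomial.C p

/-- A polynomial in the variable `λ` alone, viewed in `ℂ[q,λ]`. -/
noncomputable def ofL (p : Polynomial ℂ) : QL := p.map (Polynomial.C : ℂ →+* Polynomial ℂ)

/-- The ring homomorphism `φ : ℂ[q,λ] → ℂ(q)[[λ]]` viewing a two-variable polynomial as a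
polynomial in `λ` with coefficients in `ℂ[q] ⊆ ℂ(q)`, then as a power series in `λ`;
for `h` with `h(q,0) ≠ 0`, the fraction `a/h` has λ-adic expansion `φ a * (φ h)⁻¹`. -/
noncomputable def phi : QL →+* PowerSeries (RatFunc ℂ) :=
  (Polynomial.coeToPowerSeries.ringHom).comp
    (Polynomial.mapRingHom (algebraMap (Polynomial ℂ) (RatFunc ℂ)))

/-- Let `a ∈ ℂ[q,λ]`, `f₀(q) = ∏_{s=1}^{N}(1 − ζ_s q)` with each `ζ_s` a root of unity,
`f₁ ∈ ℂ[λ]` with `f₁(0) ≠ 0`, and `deg_q a < N`. Then `a/(f₀·f₁)` has a well-defined λ-adic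
expansion `Σ_i c_i(q) λ^i` in `ℂ(q)[[λ]]`, and every coefficient `c_i` is zero or a reduced
rational function with poles only at roots of unity. -/
theorem lambdaExpansion_of_Kminus (a : QL) (N : ℕ) (ζs : Fin N → ℂ)
    (hζ : ∀ i, IsRootOfUnity (ζs i)) (f₁ : Polynomial ℂ) (hf₁ : f₁.eval 0 ≠ 0)
    (hdeg : ∀ k : ℕ, (a.coeff k).degree < (N : WithBot ℕ)) :
    IsUnit (phi (ofQ (∏ i, (1 - Polynomial.C (ζs i) * Polynomial.X)) * ofL f₁)) ∧
    ∀ i : ℕ, ReducedPolesOnlyAtRootsOfUnity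
      (PowerSeries.coeff (R := RatFunc ℂ) i
        (phi a * (phi (ofQ (∏ i, (1 - Polynomial.C (ζs i) * Polynomial.X)) * ofL f₁))⁻¹)) := by
  classical
  set f₀ : ℂ[X] := ∏ i, (1 - Polynomial.C (ζs i) * Polynomial.X) with hf₀def
  -- each ζ is nonzero
  have hζ0 : ∀ i, ζs i ≠ 0 := by
    intro i h
    obtain ⟨n, hn, hpow⟩ := hζ i
    rw [h, zero_pow hn.ne'] at hpow
    exact zero_ne_one hpow
  -- degree of f₀ is N
  have hdegf₀ : f₀.degree = (N : WithBot ℕ) := by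
    rw [hf₀def, Polynomial.degree_prod]
    have h1 : ∀ i : Fin N, (1 - Polynomial.C (ζs i) * Polynomial.X).degree = 1 := by
      intro i
      have : (1 : ℂ[X]) - Polynomial.C (ζs i) * Polynomial.X
          = Polynomial.C (-(ζs i)) * Polynomial.X + Polynomial.C 1 := by
        rw [map_neg, map_one]; ring
      rw [this, Polynomial.degree_linear (neg_ne_zero.mpr (hζ0 i))]
    simp [h1]
  have hf₀ne : f₀ ≠ 0 := by
    intro h
    rw [h, Polynomial.degree_zero] at hdegf₀
    exact (WithBot.bot_ne_coe) hdegf₀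
  -- roots of f₀ are roots of unity
  have hroots : ∀ ζ : ℂ, f₀.IsRoot ζ → IsRootOfUnity ζ := by
    intro ζ hroot
    rw [Polynomial.IsRoot, hf₀def, Polynomial.eval_prod, Finset.prod_eq_zero_iff] at hroot
    obtain ⟨s, -, hs⟩ := hroot
    simp only [Polynomial.eval_sub, Polynomial.eval_one, Polynomial.eval_mul,
      Polynomial.eval_C, Polynomial.eval_X, sub_eq_zero] at hs
    obtain ⟨n, hn, hpow⟩ := hζ s
    refine ⟨n, hn, ?_⟩
    have := congrArg (· ^ n) hs.symm
    simp only [mul_pow, one_pow] at this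
    rw [hpow, one_mul] at this
    exact this
  -- notation
  set alg := algebraMap ℂ[X] (RatFunc ℂ) with halg
  set e : ℂ →+* RatFunc ℂ := alg.comp Polynomial.C with he
  set r : RatFunc ℂ := alg f₀ with hrdef
  have hr : r ≠ 0 := fun h =>
    hf₀ne ((map_eq_zero_iff alg (IsFractionRing.injective ℂ[X] (RatFunc ℂ))).mp h)
  -- phi of ofQ, ofL
  have hphiQ : phi (ofQ f₀) = PowerSeries.C r := by
    simp only [phi, ofQ, RingHom.comp_apply, Polynomial.coe_mapRingHom, Polynomial.map_C,
      Polynomial.coeToPowerSeries.ringHom_apply, Polynomial.coe_C, hrdef, halg]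
  have hphiL : phi (ofL f₁) = PowerSeries.map e (f₁ : PowerSeries ℂ) := by
    ext n
    simp [phi, ofL, Polynomial.coeff_coe, Polynomial.coeff_map, PowerSeries.coeff_map, he,
      RatFunc.algebraMap_C]
    exact (RatFunc.algebraMap_C _).symm
  -- inverse of f₁ as a power series over ℂ
  set u : PowerSeries ℂ := (f₁ : PowerSeries ℂ)⁻¹ with hu
  have hcu : PowerSeries.constantCoeff (f₁ : PowerSeries ℂ) ≠ 0 := by
    rwa [Polynomial.constantCoeff_coe, Polynomial.coeff_zero_eq_eval_zero]
  have hfu : (f₁ : PowerSeries ℂ) * u = 1 := PowerSeries.mul_inv_cancel _ hcu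
  set G : PowerSeries (RatFunc ℂ) := PowerSeries.C r⁻¹ * PowerSeries.map e u
    with hGdef
  have hFG : phi (ofQ f₀ * ofL f₁) * G = 1 := by
    rw [map_mul, hphiQ, hphiL, hGdef]
    calc PowerSeries.C r * PowerSeries.map e (f₁ : PowerSeries ℂ) *
        (PowerSeries.C r⁻¹ * PowerSeries.map e u)
        = (PowerSeries.C r * PowerSeries.C r⁻¹) *
          (PowerSeries.map e ((f₁ : PowerSeries ℂ) * u)) := by
          rw [map_mul]; ring
      _ = 1 := by
          rw [← map_mul, mul_inv_cancel₀ hr, hfu, map_one, map_one, mul_one]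
  have hUnit : IsUnit (phi (ofQ f₀ * ofL f₁)) := IsUnit.of_mul_eq_one _ hFG
  have hc : PowerSeries.constantCoeff (phi (ofQ f₀ * ofL f₁)) ≠ 0 := by
    intro h
    have h2 := congrArg (PowerSeries.constantCoeff (R := RatFunc ℂ)) hFG
    rw [map_mul, h, zero_mul, map_one] at h2
    exact zero_ne_one h2
  have hinv : (phi (ofQ f₀ * ofL f₁))⁻¹ = G := by
    rw [PowerSeries.inv_eq_iff_mul_eq_one hc]
    calc G * phi (ofQ f₀ * ofL f₁) = phi (ofQ f₀ * ofL f₁) * G := mul_comm _ _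
      _ = 1 := hFG
  refine ⟨hUnit, fun i => ?_⟩
  rw [hinv]
  -- coefficient computation
  have hcoeffa : ∀ j : ℕ, PowerSeries.coeff j (phi a) = alg (a.coeff j) := by
    intro j
    simp [phi, Polynomial.coeff_coe, Polynomial.coeff_map, halg]
  have hcoeffG : ∀ k : ℕ, PowerSeries.coeff k G
      = r⁻¹ * e (PowerSeries.coeff k u) := by
    intro k
    rw [hGdef, PowerSeries.coeff_C_mul, PowerSeries.coeff_map]
  set P : ℂ[X] := ∑ p ∈ Finset.HasAntidiagonal.antidiagonal i,
      Polynomial.C (PowerSeries.coeff p.2 u) * a.coeff p.1 with hPdef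
  have hPdeg : P.degree < (N : WithBot ℕ) := by
    refine lt_of_le_of_lt (Polynomial.degree_sum_le _ _) ?_
    rw [Finset.sup_lt_iff (by exact WithBot.bot_lt_coe N)]
    intro p _
    refine lt_of_le_of_lt ?_ (hdeg p.1)
    rw [← Polynomial.smul_eq_C_mul]
    exact Polynomial.degree_smul_le _ _
  have hval : PowerSeries.coeff i (phi a * G) = alg P / r := by
    rw [PowerSeries.coeff_mul, hPdef, div_eq_mul_inv, map_sum, Finset.sum_mul]
    refine Finset.sum_congr rfl fun p _ => ?_
    rw [hcoeffa, hcoeffG, map_mul]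
    have : e (PowerSeries.coeff p.2 u) = alg (Polynomial.C (PowerSeries.coeff p.2 u)) := rfl
    rw [this]
    ring
  rw [hval]
  exact ⟨P, f₀, by rw [hdegf₀]; exact hPdeg, hroots, rfl⟩
end
end
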